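/- arXiv:1012.6024 — 4 statements merged into one kernel-verified Lean document; each statement's English description precedes it below -/
import Mathlib

section
/- There exists a complex number z with nonzero imaginary part such that exp(z) = z; equivalently, z is a fixed point of the principal complex logarithm (Complex.log z = z). -/
open Real in
private lemma aux_exists : ∃ y : ℝ, y ∈ Set.Icc (1:ℝ) 3 ∧
    Real.exp (y * Real.cos y / Real.sin y) * Real.sin y = y := by
  set h : ℝ → ℝ := fun y => Real.exp (y * Real.cos y / Real.sin y) * Real.sin y - y with hh
  have hpi3 : (3:ℝ) < Real.pi := Real.pi_gt_three
  have hsinpos : ∀ y ∈ Set.Icc (1:ℝ) 3, 0 < Real.sin y := by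
    intro y hy
    exact Real.sin_pos_of_pos_of_lt_pi (by linarith [hy.1]) (by linarith [hy.2])
  have hcont : ContinuousOn h (Set.Icc (1:ℝ) 3) := by
    apply ContinuousOn.sub
    · apply ContinuousOn.mul
      · apply Real.continuous_exp.comp_continuousOn
        apply ContinuousOn.div
        · exact (continuous_id.mul Real.continuous_cos).continuousOn
        · exact Real.continuous_sin.continuousOn
        · intro y hy; exact (hsinpos y hy).ne'
      · exact Real.continuous_sin.continuousOn
    · exact continuousOn_id
  have hs1 : 0 < Real.sin 1 := hsinpos 1 (by constructor <;> norm_num)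
  have hc1 : 0 < Real.cos 1 := Real.cos_pos_of_mem_Ioo
    (by constructor <;> nlinarith [Real.pi_gt_three])
  have hsc1 : 1 < Real.sin 1 + Real.cos 1 := by
    nlinarith [Real.sin_sq_add_cos_sq 1, mul_pos hs1 hc1]
  have h1pos : 0 < h 1 := by
    have hexp : Real.cos 1 / Real.sin 1 + 1 ≤ Real.exp (Real.cos 1 / Real.sin 1) :=
      Real.add_one_le_exp _
    have hmul : (Real.cos 1 / Real.sin 1 + 1) * Real.sin 1 ≤
        Real.exp (Real.cos 1 / Real.sin 1) * Real.sin 1 :=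
      mul_le_mul_of_nonneg_right hexp hs1.le
    have heq : (Real.cos 1 / Real.sin 1 + 1) * Real.sin 1 = Real.cos 1 + Real.sin 1 := by
      field_simp
    simp only [hh, one_mul]
    nlinarith
  have hs3 : 0 < Real.sin 3 := hsinpos 3 (by constructor <;> norm_num)
  have hc3 : Real.cos 3 < 0 := by
    apply Real.cos_neg_of_pi_div_two_lt_of_lt
    · nlinarith [Real.pi_lt_d2]
    · nlinarith [Real.pi_gt_three]
  have h3neg : h 3 < 0 := by
    have harg : 3 * Real.cos 3 / Real.sin 3 < 0 :=
      div_neg_of_neg_of_pos (by nlinarith) hs3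
    have hexp : Real.exp (3 * Real.cos 3 / Real.sin 3) < 1 := by
      rw [← Real.exp_zero]; exact Real.exp_lt_exp.mpr harg
    have hsle : Real.sin 3 ≤ 1 := Real.sin_le_one 3
    have hpos : 0 < Real.exp (3 * Real.cos 3 / Real.sin 3) := Real.exp_pos _
    simp only [hh]
    nlinarith
  have hI : (0:ℝ) ∈ Set.Icc (h 3) (h 1) := ⟨h3neg.le, h1pos.le⟩
  have := intermediate_value_Icc' (by norm_num : (1:ℝ) ≤ 3) hcont hI
  obtain ⟨y, hy, hy0⟩ := this
  refine ⟨y, hy, ?_⟩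
  have : h y = 0 := hy0
  simpa [hh, sub_eq_zero] using this

theorem stmt_0 : ∃ z : ℂ, z.im ≠ 0 ∧ Complex.exp z = z ∧ Complex.log z = z := by
  obtain ⟨y, hy, heq⟩ := aux_exists
  have hsin : 0 < Real.sin y := by
    have hpi3 : (3:ℝ) < Real.pi := Real.pi_gt_three
    exact Real.sin_pos_of_pos_of_lt_pi (by linarith [hy.1]) (by linarith [hy.2])
  set x : ℝ := y * Real.cos y / Real.sin y with hx
  have hex : Real.exp x = y / Real.sin y := by
    rw [eq_div_iff hsin.ne']; exact heq
  have hexc : Real.exp x * Real.cos y = x := by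
    rw [hex, hx]; field_simp
  have hexs : Real.exp x * Real.sin y = y := heq
  refine ⟨⟨x, y⟩, ?_, ?_, ?_⟩
  · exact ne_of_gt (show (0:ℝ) < y by linarith [hy.1])
  · have : (⟨x, y⟩ : ℂ) = (x : ℂ) + (y : ℂ) * Complex.I := by
      apply Complex.ext <;> simp
    rw [this, Complex.exp_add, Complex.exp_mul_I,
      ← Complex.ofReal_exp, ← Complex.ofReal_cos, ← Complex.ofReal_sin]
    apply Complex.ext <;>
      simp [Complex.add_re, Complex.add_im, Complex.mul_re, Complex.mul_im, Complex.exp_ofReal_re, Complex.cos_ofReal_re, Complex.sin_ofReal_re, Complex.exp_ofReal_im, Complex.cos_ofReal_im, Complex.sin_ofReal_im, hexc, hexs]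
  · have hexz : Complex.exp ⟨x, y⟩ = ⟨x, y⟩ := by
      have : (⟨x, y⟩ : ℂ) = (x : ℂ) + (y : ℂ) * Complex.I := by
        apply Complex.ext <;> simp
      rw [this, Complex.exp_add, Complex.exp_mul_I,
        ← Complex.ofReal_exp, ← Complex.ofReal_cos, ← Complex.ofReal_sin]
      apply Complex.ext <;>
        simp [Complex.add_re, Complex.add_im, Complex.mul_re, Complex.mul_im, Complex.exp_ofReal_re, Complex.cos_ofReal_re, Complex.sin_ofReal_re, Complex.exp_ofReal_im, Complex.cos_ofReal_im, Complex.sin_ofReal_im, hexc, hexs]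
    have him1 : -Real.pi < (⟨x, y⟩ : ℂ).im := by
      simp only [Complex.im]
      have := Real.pi_pos; linarith [hy.1]
    have him2 : (⟨x, y⟩ : ℂ).im ≤ Real.pi := by
      simp only [Complex.im]
      linarith [hy.2, Real.pi_gt_three]
    calc Complex.log ⟨x, y⟩ = Complex.log (Complex.exp ⟨x, y⟩) := by rw [hexz]
      _ = ⟨x, y⟩ := Complex.log_exp him1 him2
end

section
/- For a real base b with 1 < b < e^(1/e), the equation b^x = x has a real solution x > 1; i.e., there exists x > 1 with Real.exp (x * Real.log b) = x. -/
theorem stmt_10 (b : ℝ) (h1 : 1 < b) (h2 : b < Real.exp (1 / Real.exp 1)) :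
    ∃ x : ℝ, 1 < x ∧ Real.exp (x * Real.log b) = x := by
  have hb0 : 0 < b := lt_trans one_pos h1
  have hlb : 0 < Real.log b := Real.log_pos h1
  have hlb' : Real.log b < 1 / Real.exp 1 := by
    calc Real.log b < Real.log (Real.exp (1 / Real.exp 1)) := Real.log_lt_log hb0 h2
    _ = 1 / Real.exp 1 := Real.log_exp _
  set c : ℝ := 1 / Real.log b with hc
  have hec : Real.exp 1 < c := by
    rw [hc]
    rw [lt_div_iff₀ hlb]
    calc Real.exp 1 * Real.log b < Real.exp 1 * (1 / Real.exp 1) :=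
      (mul_lt_mul_iff_right₀ (Real.exp_pos 1)).mpr hlb'
    _ = 1 := by field_simp
  have he1 : (2:ℝ) < Real.exp 1 := by
    have := Real.add_one_lt_exp (x := 1) one_ne_zero
    linarith
  have h1c : (1:ℝ) < c := by linarith
  set g : ℝ → ℝ := fun x => Real.exp (x * Real.log b) - x with hg
  have hcont : ContinuousOn g (Set.Icc 1 c) := by
    apply Continuous.continuousOn
    continuity
  have hg1 : g 1 = b - 1 := by
    simp [hg, Real.exp_log hb0]
  have hgc : g c = Real.exp 1 - c := by
    simp only [hg, hc]
    rw [div_mul_cancel₀ 1 (ne_of_gt hlb)]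
  have hmem : (0:ℝ) ∈ Set.Ioo (g c) (g 1) := by
    rw [hg1, hgc]
    constructor <;> [linarith; linarith]
  have := intermediate_value_Ioo' (le_of_lt h1c) hcont hmem
  obtain ⟨x, hx, hgx⟩ := this
  exact ⟨x, hx.1, by simpa [hg, sub_eq_zero] using hgx⟩
end

section
/- If z₀ is a fixed point of Complex.log with |z₀| > 1 and z₀ off the nonpositive real axis, then there is a neighborhood U of z₀ such that for every w ∈ U, the sequence of iterates (Complex.log)^[n] w converges to z₀. -/
/-! Since `log' z₀ = z₀⁻¹` has norm `< 1`, `Complex.log` is a contraction on a small ball around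
`z₀` (strict differentiability gives a Lipschitz constant `K < 1` there); the ball is then
invariant and the iterates approach `z₀` geometrically, like `K ^ n`. -/

open Filter Function Metric Set Topology
open scoped NNReal

section Attracting

variable {α : Type*} [PseudoMetricSpace α] {f : α → α} {x₀ : α} {K : ℝ≥0} {r : ℝ}

theorem LipschitzOnWith.dist_iterate_le_of_isFixedPt (hf : LipschitzOnWith K f (ball x₀ r))
    (hK : K ≤ 1) (hx₀ : IsFixedPt f x₀) {w : α} (hw : w ∈ ball x₀ r) (n : ℕ) :
    dist (f^[n] w) x₀ ≤ K ^ n * dist w x₀ := by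
  have hr : x₀ ∈ ball x₀ r := mem_ball_self (pos_of_mem_ball hw)
  have hcontract : ∀ x ∈ ball x₀ r, dist (f x) x₀ ≤ K * dist x x₀ := fun x hx => by
    simpa only [hx₀.eq] using hf.dist_le_mul x hx x₀ hr
  have hmaps : MapsTo f (ball x₀ r) (ball x₀ r) := fun x hx =>
    mem_ball.2 <| (hcontract x hx).trans_lt <|
      (mul_le_of_le_one_left dist_nonneg hK).trans_lt (mem_ball.1 hx)
  induction n with
  | zero => simp
  | succ n ih =>
    calc dist (f^[n + 1] w) x₀ = dist (f (f^[n] w)) x₀ := by rw [iterate_succ_apply']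
      _ ≤ K * dist (f^[n] w) x₀ := hcontract _ (hmaps.iterate n hw)
      _ ≤ K * (K ^ n * dist w x₀) := by gcongr
      _ = K ^ (n + 1) * dist w x₀ := by ring

theorem LipschitzOnWith.eventually_tendsto_iterate_of_isFixedPt {s : Set α}
    (hf : LipschitzOnWith K f s) (hs : s ∈ 𝓝 x₀) (hK : K < 1) (hx₀ : IsFixedPt f x₀) :
    ∀ᶠ w in 𝓝 x₀, Tendsto (fun n => f^[n] w) atTop (𝓝 x₀) := by
  obtain ⟨r, hr, hball⟩ := Metric.mem_nhds_iff.1 hs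
  filter_upwards [ball_mem_nhds x₀ hr] with w hw
  have hgeom : Tendsto (fun n => (K : ℝ) ^ n * dist w x₀) atTop (𝓝 0) := by
    simpa using (tendsto_pow_atTop_nhds_zero_of_lt_one K.2 hK).mul_const (dist w x₀)
  exact tendsto_iff_dist_tendsto_zero.2 <| squeeze_zero (fun _ => dist_nonneg)
    ((hf.mono hball).dist_iterate_le_of_isFixedPt hK.le hx₀ hw) hgeom

end Attracting

theorem HasStrictFDerivAt.eventually_tendsto_iterate_of_isFixedPt {𝕜 E : Type*}
    [NontriviallyNormedField 𝕜] [NormedAddCommGroup E] [NormedSpace 𝕜 E] {f : E → E}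
    {f' : E →L[𝕜] E} {x₀ : E} (hf : HasStrictFDerivAt f f' x₀) (hf' : ‖f'‖ < 1)
    (hx₀ : IsFixedPt f x₀) : ∀ᶠ w in 𝓝 x₀, Tendsto (fun n => f^[n] w) atTop (𝓝 x₀) := by
  obtain ⟨K, hf'K, hK⟩ := exists_between (show ‖f'‖₊ < 1 from hf')
  obtain ⟨s, hs, hlip⟩ := hf.exists_lipschitzOnWith_of_nnnorm_lt K hf'K
  exact hlip.eventually_tendsto_iterate_of_isFixedPt hs hK hx₀

theorem stmt_16 (z₀ : ℂ) (hfix : Complex.log z₀ = z₀) (habs : 1 < ‖z₀‖)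
    (hax : ¬(z₀.im = 0 ∧ z₀.re ≤ 0)) :
    ∃ U ∈ nhds z₀, ∀ w ∈ U,
      Filter.Tendsto (fun n => Complex.log^[n] w) Filter.atTop (nhds z₀) := by
  have hslit : z₀ ∈ Complex.slitPlane := by
    rw [Complex.mem_slitPlane_iff_not_le_zero, Complex.le_def]
    exact fun h => hax ⟨h.2, h.1⟩
  have hderiv : ‖(1 : ℂ →L[ℂ] ℂ).smulRight z₀⁻¹‖ < 1 := by
    simpa [norm_inv] using inv_lt_one_of_one_lt₀ habs
  exact ⟨_, (Complex.hasStrictDerivAt_log hslit).hasStrictFDerivAt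
    |>.eventually_tendsto_iterate_of_isFixedPt hderiv hfix, fun _ hw => hw⟩
end

section
/- The equation exp(z) = z has a solution in the open strip {z : 0 < Im z < π}, and Rouché's theorem / the argument principle implies exp(z) - z has exactly one zero in the rectangle [0,1] × [1, 3/2] (real part in [0,1], imaginary part in [1, 3/2]). -/
/-!
On the half-plane `π / 3 ≤ im z` the principal logarithm is a contraction with constant `3 / π`,
because `‖log' z‖ = 1 / ‖z‖ ≤ 1 / im z`. It maps the box `[0, 3/5] × [π/3, π/2]` into itself
(`arg z ≥ π / 3` as soon as `√3 re z ≤ im z`), so Banach's theorem yields a fixed point of `log`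
in the box, i.e. a solution of `exp z = z`. Conversely, a solution with `0 ≤ im z ≤ π` satisfies
`cos (im z) = re z * exp (-re z) ≤ 1 / e < 1 / 2`, so it lies in the half-plane and is a fixed
point of `log` there; the contraction property makes it unique.
-/

open Complex Set
open scoped NNReal Real

theorem NNReal.one_lt_pi_div_three : 1 < NNReal.pi / 3 := by
  rw [← NNReal.coe_lt_coe, NNReal.coe_div, NNReal.coe_real_pi]
  norm_num
  linarith [Real.pi_gt_three]

theorem Complex.lipschitzOnWith_log {c : ℝ≥0} (hc : 0 < c) :
    LipschitzOnWith c⁻¹ log {z : ℂ | c ≤ z.im} := by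
  refine (convex_halfSpace_im_ge _).lipschitzOnWith_of_nnnorm_hasDerivWithin_le
    (f' := fun z => z⁻¹) (fun z hz => ?_) (fun z hz => ?_)
  · exact (hasDerivAt_log (Or.inr ((NNReal.coe_pos.2 hc).trans_le hz).ne')).hasDerivWithinAt
  · rw [nnnorm_inv]
    refine inv_anti₀ hc ?_
    rw [← NNReal.coe_le_coe, coe_nnnorm]
    exact hz.out.trans ((le_abs_self _).trans (abs_im_le_norm z))

theorem Complex.eq_of_log_eq_self {c : ℝ≥0} (hc : 1 < c) {z w : ℂ} (hz : c ≤ z.im)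
    (hw : c ≤ w.im) (hlz : log z = z) (hlw : log w = w) : z = w := by
  have hlip := (lipschitzOnWith_log (zero_lt_one.trans hc)).dist_le_mul z hz w hw
  rw [hlz, hlw] at hlip
  have hK : ((c⁻¹ : ℝ≥0) : ℝ) < 1 := by exact_mod_cast inv_lt_one_of_one_lt₀ hc
  exact dist_le_zero.1 (by nlinarith [dist_nonneg (x := z) (y := w)])

theorem Complex.pi_div_three_le_arg {z : ℂ} (hre : 0 ≤ z.re) (him : 0 < z.im)
    (h : 3 * z.re ^ 2 ≤ z.im ^ 2) : π / 3 ≤ arg z := by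
  have hz : 0 < ‖z‖ := norm_pos_iff.2 fun h0 => by simp [h0] at him
  rw [arg_of_re_nonneg hre, Real.le_arcsin_iff_sin_le' ⟨by linarith [Real.pi_pos],
    by linarith [Real.pi_pos]⟩, Real.sin_pi_div_three, le_div_iff₀ hz]
  have hsq : (√3 / 2 * ‖z‖) ^ 2 ≤ z.im ^ 2 := by
    rw [mul_pow, div_pow, Real.sq_sqrt zero_le_three, Complex.sq_norm, normSq_apply]
    nlinarith
  exact abs_le_of_sq_le_sq' hsq him.le |>.2

def logInvariantBox : Set ℂ := Icc 0 (3 / 5) ×ℂ Icc (π / 3) (π / 2)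

theorem log_mapsTo_logInvariantBox : MapsTo log logInvariantBox logInvariantBox := by
  rintro z ⟨⟨hre₀, hre₁⟩, him₀, him₁⟩
  have hπ := Real.pi_gt_d2
  have hπ' := Real.pi_lt_d2
  have hnorm_sq : ‖z‖ ^ 2 = z.re ^ 2 + z.im ^ 2 := by rw [Complex.sq_norm, normSq_apply]; ring
  have hnorm : 1 ≤ ‖z‖ := by
    nlinarith [(le_abs_self z.im).trans (abs_im_le_norm z)]
  refine ⟨⟨?_, ?_⟩, ?_, ?_⟩ <;> simp only [log_re, log_im]
  · exact Real.log_nonneg hnorm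
  · rw [Real.log_le_iff_le_exp (zero_lt_one.trans_le hnorm)]
    have hexp : 1 + 6 / 5 + (6 / 5) ^ 2 / 2 ≤ Real.exp (3 / 5) ^ 2 := by
      rw [← Real.exp_nat_mul]
      convert Real.quadratic_le_exp_of_nonneg (x := 6 / 5) (by norm_num) using 2
      norm_num
    refine (pow_le_pow_iff_left₀ (norm_nonneg z) (Real.exp_pos _).le two_ne_zero).1 ?_
    nlinarith
  · exact pi_div_three_le_arg hre₀ (by linarith) (by nlinarith)
  · exact arg_le_pi_div_two_iff.2 (Or.inl hre₀)

theorem exists_log_eq_self_mem_logInvariantBox : ∃ z ∈ logInvariantBox, log z = z := by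
  have hc := NNReal.one_lt_pi_div_three
  have hsub : logInvariantBox ⊆ {z : ℂ | (NNReal.pi / 3 : ℝ≥0) ≤ z.im} := fun z hz => by
    simpa using hz.2.1
  have hcontr : ContractingWith (NNReal.pi / 3)⁻¹
      (log_mapsTo_logInvariantBox.restrict log logInvariantBox logInvariantBox) :=
    ⟨inv_lt_one_of_one_lt₀ hc,
      ((lipschitzOnWith_log (zero_lt_one.trans hc)).mono hsub).mapsToRestrict _⟩
  have hclosed : IsClosed logInvariantBox := isClosed_Icc.reProdIm isClosed_Icc
  have hmem : (⟨0, π / 3⟩ : ℂ) ∈ logInvariantBox :=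
    ⟨⟨le_rfl, by norm_num⟩, le_rfl, by linarith [Real.pi_pos]⟩
  obtain ⟨z, hz, hfix, -⟩ := hcontr.exists_fixedPoint' hclosed.isComplete
    log_mapsTo_logInvariantBox hmem (edist_ne_top _ _)
  exact ⟨z, hz, hfix⟩

theorem Complex.pi_div_three_lt_im_of_exp_eq_self {z : ℂ} (h : exp z = z) (him₀ : 0 ≤ z.im)
    (him₁ : z.im ≤ π) : π / 3 < z.im := by
  have hre : Real.exp z.re * Real.cos z.im = z.re := by rw [← exp_re, h]
  have hcos : Real.cos z.im * Real.exp 1 ≤ 1 := by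
    have hx : z.re * Real.exp 1 ≤ Real.exp z.re := by
      rw [← le_div_iff₀ (Real.exp_pos 1), ← Real.exp_sub]
      linarith [Real.add_one_le_exp (z.re - 1)]
    refine le_of_mul_le_mul_left ?_ (Real.exp_pos z.re)
    rwa [← mul_assoc, hre, mul_one]
  by_contra! hle
  have := Real.cos_le_cos_of_nonneg_of_le_pi him₀ (by linarith [Real.pi_pos]) hle
  rw [Real.cos_pi_div_three] at this
  nlinarith [Real.exp_one_gt_d9]

theorem Complex.im_le_three_halves_of_exp_eq_self {z : ℂ} (h : exp z = z) (hre : z.re ≤ 3 / 5)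
    (him : z.im ≤ π / 2) : z.im ≤ 3 / 2 := by
  by_contra! hlt
  -- `cos (im z) ≤ π / 2 - im z` is tiny, so `re z` and then `im z ≤ exp (re z)` are small.
  have hre_eq : Real.exp z.re * Real.cos z.im = z.re := by rw [← exp_re, h]
  have him_eq : Real.exp z.re * Real.sin z.im = z.im := by rw [← exp_im, h]
  have hcos : Real.cos z.im ≤ 0.0708 := by
    rw [← Real.sin_pi_div_two_sub]
    linarith [Real.sin_le (x := π / 2 - z.im) (by linarith), Real.pi_lt_d4]
  have hexp₁ : Real.exp z.re ≤ 5 / 2 := by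
    refine (Real.exp_le_exp.2 hre).trans ?_
    have := Real.exp_bound_div_one_sub_of_interval (x := 3 / 5) (by norm_num) (by norm_num)
    norm_num at this ⊢; exact this
  have hre_small : z.re ≤ 1 / 5 := by nlinarith [Real.exp_pos z.re]
  have hexp₂ : Real.exp z.re ≤ 5 / 4 := by
    refine (Real.exp_le_exp.2 hre_small).trans ?_
    have := Real.exp_bound_div_one_sub_of_interval (x := 1 / 5) (by norm_num) (by norm_num)
    norm_num at this ⊢; exact this
  nlinarith [Real.sin_le_one z.im, Real.exp_pos z.re]

theorem stmt_19 :
    (∃ z : ℂ, 0 < z.im ∧ z.im < Real.pi ∧ Complex.exp z = z) ∧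
    (∃! z : ℂ, z.re ∈ Set.Icc (0 : ℝ) 1 ∧ z.im ∈ Set.Icc (1 : ℝ) (3 / 2) ∧
      Complex.exp z - z = 0) := by
  have hπ := Real.pi_gt_three
  obtain ⟨z, ⟨⟨hre₀, hre₁⟩, him₀, him₁⟩, hlog⟩ := exists_log_eq_self_mem_logInvariantBox
  have hexp : exp z = z := by
    conv_lhs => rw [← hlog]
    exact exp_log fun h => by simp [h] at him₀; linarith
  have him₂ := im_le_three_halves_of_exp_eq_self hexp hre₁ him₁
  refine ⟨⟨z, by linarith, by linarith, hexp⟩, ⟨z, ⟨⟨hre₀, by linarith⟩, ⟨by linarith, him₂⟩,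
    sub_eq_zero.2 hexp⟩, ?_⟩⟩
  rintro w ⟨-, ⟨hw₀, hw₁⟩, hw⟩
  have hwexp : exp w = w := sub_eq_zero.1 hw
  have hwlog : log w = w := by
    simpa [hwexp] using log_exp (x := w) (by linarith) (by linarith)
  have hwim := pi_div_three_lt_im_of_exp_eq_self hwexp (by linarith) (by linarith)
  exact eq_of_log_eq_self NNReal.one_lt_pi_div_three (by simpa using hwim.le)
    (by simpa using him₀) hwlog hlog
end
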